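/- arXiv:1601.02887 — 5 statements merged into one kernel-verified Lean document; each statement's English description precedes it below -/
import Mathlib

section
/- For every integer b ≥ 1 and every assignment of chord indices d : Fin b → ℕ in which each d j is odd and d j ≥ 3, there exist a threshold K ∈ ℕ and a value γ ∈ ℕ∞ such that for every k ≥ K (in particular with 2*b*k − 3 ≥ d j for all j, so the chord indices are admissible), the D3 graph G(b*k, b, d) of order 2*b*k has girth equal to γ. That is, for fixed symmetry factor b and fixed chord indices, the girth of the D3 graph of order 2b(k+i) is the same for all i ≥ 0 once k is beyond the threshold. -/
/-- The chord/successor relation underlying the D3 graph: `y` follows `x` along the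
Hamiltonian cycle, or `y` is reached from an odd-labelled `x` by the chord `d j`,
where `j` is the (unique) index with `x.val ≡ 2*j + 1 (mod 2*b)`. -/
def d3Rel (m b : ℕ) (d : Fin b → ℕ) (x y : ZMod (2 * m)) : Prop :=
  y = x + 1 ∨
    (Odd x.val ∧ ∃ j : Fin b, x.val % (2 * b) = 2 * (j : ℕ) + 1 ∧ y = x + (d j : ZMod (2 * m)))

/-- The D3 graph `G(m, b, d)` of order `2*m` with symmetry factor `b` and
chord indices `d : Fin b → ℕ`: distinct vertices `x y : ZMod (2*m)` are adjacent iff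
`y = x + 1`, or `y = x - 1`, or `x` is odd and `y = x + d j` for the unique `j` with
`x.val ≡ 2*j + 1 (mod 2*b)`, or `y` is odd and `x = y + d j` likewise. -/
def D3Graph (m b : ℕ) (d : Fin b → ℕ) : SimpleGraph (ZMod (2 * m)) where
  Adj x y := x ≠ y ∧ (d3Rel m b d x y ∨ d3Rel m b d y x)
  symm := by
    constructor
    intro x y h
    exact ⟨h.1.symm, h.2.symm⟩
  loopless := by
    constructor
    intro x h
    exact h.1 rfl


/-!
Every `D3Graph m b d` with `b ∣ m` is the quotient modulo `2 * m` of a single graph `D3Cover b d`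
on `ℤ`, and the quotient map is a covering: every edge at `x mod 2 * m` lifts to an edge at `x`.
Let `D` bound the chord indices. Adjacent integers of the cover differ by at most `D`, and the
chord from `1` gives the cover a cycle of length `d 0 + 1 ≤ D + 1`. Once `D * (D + 1) < m`,
shortest cycles of the cover and of the quotient therefore span fewer than `2 * m` consecutive
integers, so the former project injectively and the latter lift to closed walks. Hence all these
graphs have the girth of the cover.
-/

open SimpleGraph

namespace SimpleGraph

variable {V V' : Type*} {G : SimpleGraph V} {G' : SimpleGraph V'}

theorem Walk.IsCycle.map_of_injOn {f : G →g G'} {u : V} {p : G.Walk u u} (hp : p.IsCycle)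
    (hf : Set.InjOn f {v | v ∈ p.support}) : (p.map f).IsCycle := by
  cases p with
  | nil => exact absurd hp Walk.not_isCycle_nil
  | @cons _ v _ h q =>
    rw [Walk.cons_isCycle_iff] at hp
    rw [Walk.map_cons, Walk.cons_isCycle_iff]
    have hsupp : ∀ x ∈ q.support, x ∈ (Walk.cons h q).support := fun x hx => by simp [hx]
    refine ⟨?_, fun hmem => hp.2 ?_⟩
    · rw [Walk.isPath_def, Walk.support_map]
      exact hp.1.support_nodup.map_on fun x hx y hy hxy => hf (hsupp x hx) (hsupp y hy) hxy
    · obtain ⟨e, he, hfe⟩ := List.mem_map.mp (Walk.edges_map f q ▸ hmem)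
      induction e using Sym2.ind with
      | h a c =>
        have ha := hsupp a (q.fst_mem_support_of_mem_edges he)
        have hc := hsupp c (q.snd_mem_support_of_mem_edges he)
        have hu : u ∈ (Walk.cons h q).support := Walk.start_mem_support _
        have hv : v ∈ (Walk.cons h q).support := hsupp v q.start_mem_support
        rw [Sym2.map_mk, Sym2.eq_iff] at hfe
        rcases hfe with ⟨hau, hcv⟩ | ⟨hav, hcu⟩
        · rwa [hf ha hu hau, hf hc hv hcv] at he
        · rwa [hf ha hv hav, hf hc hu hcu, Sym2.eq_swap] at he

theorem Walk.exists_map_eq_of_lift (f : G →g G')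
    (hf : ∀ {x : V} {y' : V'}, G'.Adj (f x) y' → ∃ y, G.Adj x y ∧ f y = y')
    {u : V} {v' : V'} (p : G'.Walk (f u) v') :
    ∃ (v : V) (q : G.Walk u v) (hv : f v = v'), (q.map f).copy rfl hv = p := by
  suffices ∀ {u'} (p : G'.Walk u' v') (u : V) (hu : f u = u'),
      ∃ (v : V) (q : G.Walk u v) (hv : f v = v'), (q.map f).copy hu hv = p from this p u rfl
  clear p
  intro u' p
  induction p with
  | nil => exact fun u hu => ⟨u, .nil, hu, by subst hu; rfl⟩
  | cons h p ih =>
    intro u hu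
    subst hu
    obtain ⟨y, hy, rfl⟩ := hf h
    obtain ⟨v, q, rfl, hq⟩ := ih y rfl
    exact ⟨v, .cons hy q, rfl, by simpa using hq⟩

end SimpleGraph

theorem Int.eq_of_intCast_eq_of_abs_sub_lt {n : ℕ} {x y : ℤ} (h : (x : ZMod n) = y)
    (hxy : |x - y| < n) : x = y := by
  rw [ZMod.intCast_eq_intCast_iff_dvd_sub] at h
  have := Int.eq_zero_of_abs_lt_dvd h (by rwa [abs_sub_comm])
  linarith

/-- `d3Rel` on `ℤ`; an odd residue modulo `2 * b` already forces `x` to be odd. -/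
def d3CoverRel (b : ℕ) (d : Fin b → ℕ) (x y : ℤ) : Prop :=
  y = x + 1 ∨ ∃ j : Fin b, x % (2 * b) = 2 * (j : ℕ) + 1 ∧ y = x + d j

/-- The infinite cyclic cover of every `D3Graph m b d` with `b ∣ m`. -/
def D3Cover (b : ℕ) (d : Fin b → ℕ) : SimpleGraph ℤ := SimpleGraph.fromRel (d3CoverRel b d)

namespace D3Cover

variable {b : ℕ} {d : Fin b → ℕ} {D : ℕ}

theorem abs_sub_le_of_adj (hD : ∀ j, d j ≤ D) (hD1 : 1 ≤ D) {x y : ℤ}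
    (h : (D3Cover b d).Adj x y) : |y - x| ≤ D := by
  have key : ∀ {s t : ℤ}, d3CoverRel b d s t → |t - s| ≤ D := by
    rintro s t (rfl | ⟨j, -, rfl⟩)
    · simpa using hD1
    · simpa using hD j
  rcases h.2 with h | h
  · exact key h
  · rw [abs_sub_comm]; exact key h

theorem abs_sub_le_of_walk (hD : ∀ j, d j ≤ D) (hD1 : 1 ≤ D) {x y : ℤ}
    (p : (D3Cover b d).Walk x y) : |y - x| ≤ p.length * D := by
  induction p with
  | nil => simp
  | @cons x y z h p ih =>
    have := abs_sub_le_of_adj hD hD1 h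
    rw [Walk.length_cons]
    push_cast
    linarith [abs_sub_le z y x]

theorem abs_sub_le_of_mem_support (hD : ∀ j, d j ≤ D) (hD1 : 1 ≤ D) {x y z : ℤ}
    (p : (D3Cover b d).Walk x y) (hz : z ∈ p.support) : |z - x| ≤ p.length * D :=
  (abs_sub_le_of_walk hD hD1 (p.takeUntil z hz)).trans <| by
    gcongr
    exact_mod_cast p.length_takeUntil_le_length hz

/-- The chord from `1` closes the path `1, 2, …, 1 + d 0` into a cycle. -/
theorem egirth_le (hb : 0 < b) (h2 : 2 ≤ d ⟨0, hb⟩) :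
    (D3Cover b d).egirth ≤ d ⟨0, hb⟩ + 1 := by
  obtain ⟨n, hn⟩ : ∃ n, d ⟨0, hb⟩ = n + 2 := ⟨d ⟨0, hb⟩ - 2, by omega⟩
  let φ : cycleGraph (n + 3) →g D3Cover b d :=
    { toFun := fun i => 1 + (i : ℕ)
      map_rel' := by
        have step : ∀ {i j : Fin (n + 3)}, (i - j).val = 1 →
            d3CoverRel b d (1 + (j : ℕ)) (1 + (i : ℕ)) ∨
              d3CoverRel b d (1 + (i : ℕ)) (1 + (j : ℕ)) := by
          intro i j hij
          rcases le_or_gt j i with hji | hij'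
          · rw [Fin.coe_sub_iff_le.mpr hji] at hij
            left; left; omega
          · rw [Fin.coe_sub_iff_lt.mpr hij'] at hij
            right; right
            refine ⟨⟨0, hb⟩, ?_, ?_⟩
            · rw [show (i : ℕ) = 0 by omega]
              exact Int.emod_eq_of_lt (by norm_num) (by omega)
            · omega
        intro i j hij
        refine ⟨fun h => (cycleGraph (n + 3)).ne_of_adj hij (Fin.ext (by omega)), ?_⟩
        rcases cycleGraph_adj'.mp hij with h | h
        · exact (step h).symm
        · exact step h }
  have hφ : Function.Injective φ := fun i j h => by
    have h' : (1 : ℤ) + (i : ℕ) = 1 + (j : ℕ) := h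
    exact Fin.ext (by omega)
  obtain ⟨v, c, hc, hlen⟩ :=
    (cycleGraph_isContained_iff (by omega)).mp ⟨φ.toCopy hφ⟩
  calc (D3Cover b d).egirth ≤ c.length := egirth_le_length hc
    _ = d ⟨0, hb⟩ + 1 := by rw [hlen, hn]; rfl

end D3Cover

namespace D3Graph

variable {m b : ℕ} {d : Fin b → ℕ} {D : ℕ}

theorem val_intCast_emod (hm : 0 < m) (hbm : b ∣ m) (t : ℤ) :
    ((t : ZMod (2 * m)).val : ℤ) % (2 * b) = t % (2 * b) := by
  have : NeZero (2 * m) := ⟨by omega⟩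
  rw [ZMod.val_intCast]
  exact Int.emod_emod_of_dvd t (by exact_mod_cast mul_dvd_mul_left 2 hbm)

theorem d3Rel_intCast (hm : 0 < m) (hbm : b ∣ m) {s t : ℤ} (h : d3CoverRel b d s t) :
    d3Rel m b d s t := by
  rcases h with rfl | ⟨j, hj, rfl⟩
  · left; push_cast; rfl
  · have hval : (s : ZMod (2 * m)).val % (2 * b) = 2 * j + 1 := by
      have := val_intCast_emod hm hbm s
      rw [hj] at this
      exact_mod_cast this
    have hodd : Odd (s : ZMod (2 * m)).val := by
      rw [Nat.odd_iff, ← Nat.mod_mod_of_dvd _ (dvd_mul_right 2 b), hval]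
      omega
    exact Or.inr ⟨hodd, j, hval, by push_cast; rfl⟩

theorem exists_d3CoverRel (hm : 0 < m) (hbm : b ∣ m) {s : ℤ} {y : ZMod (2 * m)}
    (h : d3Rel m b d s y) : ∃ t, d3CoverRel b d s t ∧ (t : ZMod (2 * m)) = y := by
  rcases h with rfl | ⟨-, j, hj, rfl⟩
  · exact ⟨s + 1, Or.inl rfl, by push_cast; rfl⟩
  · refine ⟨s + d j, Or.inr ⟨j, ?_, rfl⟩, by push_cast; rfl⟩
    rw [← val_intCast_emod hm hbm s]
    exact_mod_cast hj

theorem exists_d3CoverRel_symm (hm : 0 < m) (hbm : b ∣ m) {s : ℤ} {y : ZMod (2 * m)}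
    (h : d3Rel m b d y s) : ∃ t, d3CoverRel b d t s ∧ (t : ZMod (2 * m)) = y := by
  rcases h with h | ⟨-, j, hj, h⟩
  · exact ⟨s - 1, Or.inl (by ring), by push_cast; rw [h]; ring⟩
  · have hy : ((s - d j : ℤ) : ZMod (2 * m)) = y := by push_cast; rw [h]; ring
    refine ⟨s - d j, Or.inr ⟨j, ?_, by ring⟩, hy⟩
    rw [← val_intCast_emod hm hbm, hy]
    exact_mod_cast hj

theorem exists_adj_of_adj (hm : 0 < m) (hbm : b ∣ m) {s : ℤ} {y : ZMod (2 * m)}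
    (h : (D3Graph m b d).Adj s y) : ∃ t, (D3Cover b d).Adj s t ∧ (t : ZMod (2 * m)) = y := by
  obtain ⟨hne, h | h⟩ := h
  · obtain ⟨t, ht, rfl⟩ := exists_d3CoverRel hm hbm h
    exact ⟨t, ⟨by rintro rfl; exact hne rfl, Or.inl ht⟩, rfl⟩
  · obtain ⟨t, ht, rfl⟩ := exists_d3CoverRel_symm hm hbm h
    exact ⟨t, ⟨by rintro rfl; exact hne rfl, Or.inr ht⟩, rfl⟩

def coverHom (hbm : b ∣ m) (hD : ∀ j, d j ≤ D) (hD1 : 1 ≤ D) (hDm : D < 2 * m) :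
    D3Cover b d →g D3Graph m b d where
  toFun t := t
  map_rel' {s t} h := by
    refine ⟨fun hst => h.ne ?_, ?_⟩
    · exact (Int.eq_of_intCast_eq_of_abs_sub_lt hst.symm
        ((D3Cover.abs_sub_le_of_adj hD hD1 h).trans_lt (by exact_mod_cast hDm))).symm
    · rcases h.2 with h | h
      · exact Or.inl (d3Rel_intCast (by omega) hbm h)
      · exact Or.inr (d3Rel_intCast (by omega) hbm h)

/-- A shortest cycle of the cover has length at most `D + 1`, so it spans fewer than `2 * m`
consecutive integers and stays a cycle modulo `2 * m`. -/
theorem egirth_le_egirth_D3Cover (hb : 0 < b) (h2 : 2 ≤ d ⟨0, hb⟩) (hD : ∀ j, d j ≤ D)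
    (hbm : b ∣ m) (hm : D * (D + 1) < m) : (D3Graph m b d).egirth ≤ (D3Cover b d).egirth := by
  have hD1 : 1 ≤ D := by linarith [hD ⟨0, hb⟩]
  have hcover : (D3Cover b d).egirth ≤ D + 1 :=
    (D3Cover.egirth_le hb h2).trans (by exact_mod_cast Nat.add_le_add_right (hD _) 1)
  obtain ⟨t, c, hc, hlen⟩ := (exists_egirth_eq_length (G := D3Cover b d)).mpr fun hacyc => by
    simp [egirth_eq_top.mpr hacyc] at hcover
  have hL : c.length ≤ D + 1 := by exact_mod_cast hlen ▸ hcover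
  let f := coverHom hbm hD hD1 (by nlinarith)
  have hinj : Set.InjOn f {v | v ∈ c.support} := by
    intro x hx y hy hxy
    have hx := D3Cover.abs_sub_le_of_mem_support hD hD1 c hx
    have hy := D3Cover.abs_sub_le_of_mem_support hD hD1 c hy
    have : (c.length * D : ℤ) < m := by
      exact_mod_cast (Nat.mul_le_mul_right D hL).trans_lt (by linarith)
    refine Int.eq_of_intCast_eq_of_abs_sub_lt hxy ?_
    push_cast
    linarith [abs_sub_le x t y, abs_sub_comm y t]
  calc (D3Graph m b d).egirth ≤ (c.map f).length := egirth_le_length (hc.map_of_injOn hinj)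
    _ = (D3Cover b d).egirth := by rw [Walk.length_map, hlen]

/-- Conversely a short cycle modulo `2 * m` lifts, vertex by vertex, to a walk in the cover,
which is closed because its endpoints differ by less than `2 * m`. -/
theorem egirth_D3Cover_le (hD : ∀ j, d j ≤ D) (hD1 : 1 ≤ D) (hbm : b ∣ m)
    (hm : D * (D + 1) < m) (hg : (D3Graph m b d).egirth ≤ D + 1) :
    (D3Cover b d).egirth ≤ (D3Graph m b d).egirth := by
  by_cases hacyc : (D3Graph m b d).IsAcyclic
  · rw [egirth_eq_top.mpr hacyc]; exact le_top
  obtain ⟨u, p, hp, hlen⟩ := exists_egirth_eq_length.mpr hacyc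
  have hL : p.length ≤ D + 1 := by exact_mod_cast hlen ▸ hg
  obtain ⟨t, rfl⟩ : ∃ t : ℤ, (t : ZMod (2 * m)) = u := by
    have : NeZero (2 * m) := ⟨by omega⟩
    exact ⟨u.val, by simp⟩
  let f := coverHom hbm hD hD1 (by nlinarith)
  obtain ⟨v, q, hv, hq⟩ := Walk.exists_map_eq_of_lift f (exists_adj_of_adj (by omega) hbm) p
  have hqp : q.length = p.length := by
    have := congrArg Walk.length hq
    simp only [Walk.length_copy, Walk.length_map] at this
    exact this
  obtain rfl : v = t := by
    refine Int.eq_of_intCast_eq_of_abs_sub_lt hv ?_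
    have := D3Cover.abs_sub_le_of_walk hD hD1 q
    have : (q.length * D : ℤ) < 2 * m := by
      exact_mod_cast (Nat.mul_le_mul_right D (hqp ▸ hL)).trans_lt (by linarith)
    push_cast
    linarith
  have hq' : q.map f = p := hq
  calc (D3Cover b d).egirth ≤ q.length := egirth_le_length (hq' ▸ hp).of_map
    _ = (D3Graph m b d).egirth := by rw [hqp, hlen]

theorem egirth_eq_egirth_D3Cover (hb : 0 < b) (h2 : 2 ≤ d ⟨0, hb⟩) (hD : ∀ j, d j ≤ D)
    (hbm : b ∣ m) (hm : D * (D + 1) < m) : (D3Graph m b d).egirth = (D3Cover b d).egirth := by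
  have hle := egirth_le_egirth_D3Cover hb h2 hD hbm hm
  refine le_antisymm hle (egirth_D3Cover_le hD (by linarith [hD ⟨0, hb⟩]) hbm hm (hle.trans ?_))
  exact (D3Cover.egirth_le hb h2).trans (by exact_mod_cast Nat.add_le_add_right (hD _) 1)

end D3Graph

theorem stmt_0_general (b : ℕ) (hb : 1 ≤ b) (d : Fin b → ℕ)
    (h3 : ∀ j, 3 ≤ d j) :
    ∃ (K : ℕ) (γ : ℕ∞), ∀ k : ℕ, K ≤ k →
      (∀ j, d j ≤ 2 * b * k - 3) ∧ (D3Graph (b * k) b d).egirth = γ := by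
  obtain ⟨D, hD⟩ : ∃ D, ∀ j, d j ≤ D :=
    ⟨Finset.univ.sup d, fun j => Finset.le_sup (Finset.mem_univ j)⟩
  refine ⟨D * (D + 1) + 1, (D3Cover b d).egirth, fun k hk => ?_⟩
  have hbk : D * (D + 1) < b * k := by nlinarith
  refine ⟨fun j => ?_, ?_⟩
  · have := hD j
    have : D ≤ D * (D + 1) := Nat.le_mul_of_pos_right D (by omega)
    have : 2 * b * k = 2 * (b * k) := by ring
    omega
  · exact D3Graph.egirth_eq_egirth_D3Cover hb (by linarith [h3 ⟨0, hb⟩]) hD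
      (dvd_mul_right b k) hbk

/-- For fixed symmetry factor `b ≥ 1` and fixed odd chord indices `d j ≥ 3`, there is a
threshold `K` and a value `γ : ℕ∞` such that for every `k ≥ K` the chord indices are
admissible (`d j ≤ 2*b*k - 3`) and the D3 graph of order `2*b*k` has girth `γ`. -/
theorem stmt_0 (b : ℕ) (hb : 1 ≤ b) (d : Fin b → ℕ)
    (hodd : ∀ j, Odd (d j)) (h3 : ∀ j, 3 ≤ d j) :
    ∃ (K : ℕ) (γ : ℕ∞), ∀ k : ℕ, K ≤ k →
      (∀ j, d j ≤ 2 * b * k - 3) ∧ (D3Graph (b * k) b d).egirth = γ :=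
  stmt_0_general b hb d h3
end

section
/- Let G(m, b, d) be a D3 graph. Then the translation map x ↦ x + 2*b on ZMod (2*m) is a graph automorphism of G(m, b, d); that is, x and y are adjacent in G(m, b, d) if and only if x + 2*b and y + 2*b are adjacent in G(m, b, d). (This is the rotational symmetry associated with symmetry factor b.) -/
theorem ZMod.val_add_natCast_mod_of_dvd {n k c : ℕ} [NeZero n] (hkn : k ∣ n) (hkc : k ∣ c)
    (x : ZMod n) : (x + (c : ZMod n)).val % k = x.val % k := by
  rw [ZMod.val_add, ZMod.val_natCast, Nat.mod_mod_of_dvd _ hkn, Nat.add_mod,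
    Nat.mod_mod_of_dvd _ hkn, Nat.mod_eq_zero_of_dvd hkc, add_zero, Nat.mod_mod]

theorem ZMod.odd_val_add_natCast_iff {n c : ℕ} [NeZero n] (hn : 2 ∣ n) (hc : 2 ∣ c)
    (x : ZMod n) : Odd (x + (c : ZMod n)).val ↔ Odd x.val := by
  rw [Nat.odd_iff, Nat.odd_iff, ZMod.val_add_natCast_mod_of_dvd hn hc]

section Translation

variable {m b : ℕ} [NeZero m] (d : Fin b → ℕ) {c : ℕ}

theorem d3Rel_add_natCast_iff (hbm : b ∣ m) (hc : 2 * b ∣ c) (x y : ZMod (2 * m)) :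
    d3Rel m b d (x + c) (y + c) ↔ d3Rel m b d x y := by
  have h2c : 2 ∣ c := dvd_trans (dvd_mul_right 2 b) hc
  unfold d3Rel
  rw [ZMod.odd_val_add_natCast_iff (dvd_mul_right 2 m) h2c,
    ZMod.val_add_natCast_mod_of_dvd (mul_dvd_mul_left 2 hbm) hc]
  simp only [add_right_comm _ (c : ZMod (2 * m)), add_left_inj]

theorem D3Graph.adj_add_natCast_iff (hbm : b ∣ m) (hc : 2 * b ∣ c) (x y : ZMod (2 * m)) :
    (D3Graph m b d).Adj (x + c) (y + c) ↔ (D3Graph m b d).Adj x y := by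
  simp only [D3Graph, ne_eq, add_left_inj, d3Rel_add_natCast_iff d hbm hc]

end Translation

theorem stmt_2_general (m b : ℕ) (hm : 2 ≤ m) (hbm : b ∣ m)
    (d : Fin b → ℕ) :
    ∀ x y : ZMod (2 * m),
      (D3Graph m b d).Adj x y ↔
        (D3Graph m b d).Adj (x + ((2 * b : ℕ) : ZMod (2 * m))) (y + ((2 * b : ℕ) : ZMod (2 * m))) := by
  have : NeZero m := ⟨by omega⟩
  intro x y
  exact (D3Graph.adj_add_natCast_iff d hbm dvd_rfl x y).symm

/-- Translation by `2*b` is an automorphism of the D3 graph `G(m, b, d)`. -/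
theorem stmt_2 (m b : ℕ) (hm : 2 ≤ m) (hb : 1 ≤ b) (hbm : b ∣ m)
    (d : Fin b → ℕ) (hodd : ∀ j, Odd (d j)) (h3 : ∀ j, 3 ≤ d j)
    (hle : ∀ j, d j ≤ 2 * m - 3) :
    ∀ x y : ZMod (2 * m),
      (D3Graph m b d).Adj x y ↔
        (D3Graph m b d).Adj (x + ((2 * b : ℕ) : ZMod (2 * m))) (y + ((2 * b : ℕ) : ZMod (2 * m))) :=
  stmt_2_general m b hm hbm d
end

section
/- Let G(m, b, d) be a D3 graph. Then: (1) G(m, b, d) is bipartite (2-colorable), with the vertices of even value and the vertices of odd value as the two color classes; (2) G(m, b, d) contains a Hamiltonian cycle, namely the cycle 0, 1, 2, …, 2m−1, 0; and (3) if the map sending j ∈ Fin b to the residue (2*j + 1 + d j) mod 2*b is injective, then G(m, b, d) is 3-regular (every vertex has degree 3). -/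
theorem ZMod.val_add_natCast_mod {N M : ℕ} [NeZero N] (hMN : M ∣ N) (x : ZMod N) (k : ℕ) :
    (x + k).val % M = (x.val + k) % M := by
  rw [ZMod.val_add, ZMod.val_natCast, Nat.mod_mod_of_dvd _ hMN, Nat.add_mod,
    Nat.mod_mod_of_dvd _ hMN, ← Nat.add_mod]

theorem ZMod.intCast_ne_intCast_of_abs_sub_lt {N : ℕ} {a c : ℤ} (hac : a ≠ c)
    (hlt : |c - a| < N) : (a : ZMod N) ≠ c := fun h => by
  have := Int.eq_zero_of_abs_lt_dvd ((ZMod.intCast_eq_intCast_iff_dvd_sub a c N).1 h) hlt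
  omega

theorem exists_mod_two_mul_eq_of_injective {b : ℕ} {f : Fin b → ℕ} (hf : ∀ j, Even (f j))
    (hinj : Function.Injective fun j => f j % (2 * b)) {r : ℕ} (hr : Even r) (hrb : r < 2 * b) :
    ∃ j, f j % (2 * b) = r := by
  have heven (j : Fin b) : f j % (2 * b) % 2 = 0 := by
    rw [Nat.mod_mod_of_dvd _ (dvd_mul_right 2 b), ← Nat.even_iff]
    exact hf j
  let half (j : Fin b) : Fin b := ⟨f j % (2 * b) / 2, by
    have := Nat.mod_lt (f j) (by have := j.pos; omega : 0 < 2 * b); omega⟩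
  have hhalf : Function.Injective half := fun i j hij => by
    have := heven i; have := heven j; have := Fin.val_eq_of_eq hij
    exact hinj (by simp only [half] at *; omega)
  obtain ⟨j, hj⟩ := Finite.injective_iff_surjective.1 hhalf ⟨r / 2, by omega⟩
  have := heven j; have := Fin.val_eq_of_eq hj; have := Nat.even_iff.1 hr
  exact ⟨j, by simp only [half] at *; omega⟩

namespace SimpleGraph

variable {n : ℕ} {G : SimpleGraph (ZMod n)}

def succWalk (h : ∀ x : ZMod n, G.Adj x (x + 1)) : (k : ℕ) → (a : ZMod n) → G.Walk a (a + k)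
  | 0, a => Walk.nil.copy rfl (by simp)
  | k + 1, a => ((succWalk h k (a + 1)).cons (h a)).copy rfl (by push_cast; ring)

theorem length_succWalk (h : ∀ x : ZMod n, G.Adj x (x + 1)) :
    ∀ k a, (succWalk h k a).length = k
  | 0, a => by simp [succWalk]
  | k + 1, a => by simp [succWalk, length_succWalk h k]

theorem support_succWalk (h : ∀ x : ZMod n, G.Adj x (x + 1)) :
    ∀ k a, (succWalk h k a).support = a :: (List.range k).map fun i => a + (i + 1 : ℕ)
  | 0, a => by simp [succWalk]
  | k + 1, a => by
    rw [succWalk, Walk.support_copy, Walk.support_cons, support_succWalk h k,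
      List.range_succ_eq_map]
    simp only [List.map_cons, List.map_map, Function.comp_def]
    push_cast
    simp only [add_assoc, add_comm (1 : ZMod n)]

theorem exists_isHamiltonianCycle_of_adj_add_one (hn : 3 ≤ n)
    (h : ∀ x : ZMod n, G.Adj x (x + 1)) :
    ∃ c : G.Walk 0 0, c.IsHamiltonianCycle ∧
      c.support = 0 :: (List.range n).map fun i => ((i + 1 : ℕ) : ZMod n) := by
  have : NeZero n := ⟨by omega⟩
  let c : G.Walk 0 0 := (succWalk h n 0).copy rfl (by simp)
  have hsupp : c.support = 0 :: (List.range n).map fun i => ((i + 1 : ℕ) : ZMod n) := by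
    simp [c, support_succWalk]
  have hlen : c.length = n := by simp [c, length_succWalk]
  have hnil : ¬ c.Nil := Walk.not_nil_iff_lt_length.2 (by omega)
  refine ⟨c, Walk.isHamiltonianCycle_iff_isCycle_and_length_eq.2 ⟨?_, by simp [hlen]⟩,
    hsupp⟩
  refine Walk.isCycle_iff_isPath_tail_and_le_length.2 ⟨?_, by omega⟩
  rw [Walk.isPath_def, Walk.support_tail_of_not_nil _ hnil, hsupp, List.tail_cons]
  refine List.nodup_range.map_on fun i hi j hj hij => ?_
  push_cast at hij
  simpa [ZMod.val_cast_of_lt (List.mem_range.1 hi), ZMod.val_cast_of_lt (List.mem_range.1 hj)]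
    using congrArg ZMod.val (add_right_cancel hij)

end SimpleGraph

namespace D3Graph

variable {m b : ℕ} {d : Fin b → ℕ}

def IsChord (m b : ℕ) (d : Fin b → ℕ) (x y : ZMod (2 * m)) : Prop :=
  Odd x.val ∧ ∃ j : Fin b, x.val % (2 * b) = 2 * (j : ℕ) + 1 ∧ y = x + (d j : ZMod (2 * m))

theorem adj_iff {x y : ZMod (2 * m)} :
    (D3Graph m b d).Adj x y ↔
      x ≠ y ∧ (y = x + 1 ∨ y = x - 1 ∨ IsChord m b d x y ∨ IsChord m b d y x) := by
  rw [eq_sub_iff_add_eq, eq_comm (a := y + 1)]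
  simp only [D3Graph, d3Rel, IsChord, or_assoc, or_left_comm]

theorem adj_add_one (hm : 1 < m) (x : ZMod (2 * m)) : (D3Graph m b d).Adj x (x + 1) := by
  have : Fact (1 < 2 * m) := ⟨by omega⟩
  exact ⟨by simp, Or.inl (Or.inl rfl)⟩

section

variable [NeZero m]

theorem val_mod_two_ne_of_d3Rel (hodd : ∀ j, Odd (d j)) {x y : ZMod (2 * m)}
    (h : d3Rel m b d x y) : x.val % 2 ≠ y.val % 2 := by
  have h2 : 2 ∣ 2 * m := dvd_mul_right 2 m
  rcases h with rfl | ⟨-, j, -, rfl⟩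
  · rw [← Nat.cast_one, ZMod.val_add_natCast_mod h2]
    omega
  · rw [ZMod.val_add_natCast_mod h2]
    have := Nat.odd_iff.1 (hodd j)
    omega

theorem val_mod_two_ne_of_adj (hodd : ∀ j, Odd (d j)) {x y : ZMod (2 * m)}
    (h : (D3Graph m b d).Adj x y) : x.val % 2 ≠ y.val % 2 :=
  h.2.elim (val_mod_two_ne_of_d3Rel hodd) fun h => (val_mod_two_ne_of_d3Rel hodd h).symm

theorem even_val_iff_odd_val_of_adj (hodd : ∀ j, Odd (d j)) {x y : ZMod (2 * m)}
    (h : (D3Graph m b d).Adj x y) : Even x.val ↔ Odd y.val := by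
  have := val_mod_two_ne_of_adj hodd h
  rw [Nat.even_iff, Nat.odd_iff]
  omega

theorem colorable_two (hodd : ∀ j, Odd (d j)) : (D3Graph m b d).Colorable 2 :=
  ⟨SimpleGraph.Coloring.mk (fun v => ⟨v.val % 2, Nat.mod_lt _ two_pos⟩) fun h =>
    Fin.ne_of_val_ne (val_mod_two_ne_of_adj hodd h)⟩

theorem exists_isChord_iff_eq_add_of_odd (hodd : ∀ j, Odd (d j)) (hb : 0 < b) {v : ZMod (2 * m)}
    (hv : Odd v.val) :
    ∃ j : Fin b, ∀ w, IsChord m b d v w ∨ IsChord m b d w v ↔ w = v + d j := by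
  have hr : v.val % (2 * b) % 2 = 1 := by
    rw [Nat.mod_mod_of_dvd _ (dvd_mul_right 2 b)]
    exact Nat.odd_iff.1 hv
  have hlt := Nat.mod_lt v.val (by omega : 0 < 2 * b)
  refine ⟨⟨v.val % (2 * b) / 2, by omega⟩, fun w => ⟨?_, ?_⟩⟩
  · rintro (⟨-, j, hj, rfl⟩ | hwv)
    · rw [show j = ⟨v.val % (2 * b) / 2, _⟩ from Fin.ext (by simp only; omega)]
    · have := val_mod_two_ne_of_d3Rel hodd (Or.inr hwv)
      have := Nat.odd_iff.1 hwv.1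
      have := Nat.odd_iff.1 hv
      omega
  · rintro rfl
    exact Or.inl ⟨hv, _, by simp only; omega, rfl⟩

theorem exists_isChord_iff_eq_sub_of_even (hb : 0 < b) (hbm : b ∣ m) (hodd : ∀ j, Odd (d j))
    (hinj : Function.Injective fun j : Fin b => (2 * (j : ℕ) + 1 + d j) % (2 * b))
    {v : ZMod (2 * m)} (hv : Even v.val) :
    ∃ j : Fin b, ∀ w, IsChord m b d v w ∨ IsChord m b d w v ↔ w = v - d j := by
  have hdvd : 2 * b ∣ 2 * m := mul_dvd_mul_left 2 hbm
  have hres : Even (v.val % (2 * b)) := by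
    rw [Nat.even_iff, Nat.mod_mod_of_dvd _ (dvd_mul_right 2 b), ← Nat.even_iff]
    exact hv
  obtain ⟨j₁, hj₁⟩ := exists_mod_two_mul_eq_of_injective
    (fun j => by simpa [parity_simps] using hodd j) hinj hres (Nat.mod_lt _ (by omega))
  refine ⟨j₁, fun w => ⟨?_, ?_⟩⟩
  · rintro (h | ⟨-, j, hj, rfl⟩)
    · exact absurd h.1 (Nat.not_odd_iff_even.2 hv)
    · have : j = j₁ := hinj <| by
        simp only at hj₁ ⊢
        rw [hj₁, ZMod.val_add_natCast_mod hdvd, ← Nat.mod_add_mod w.val, hj]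
      rw [this, add_sub_cancel_right]
  · rintro rfl
    have hw : (v - d j₁).val % (2 * b) = 2 * (j₁ : ℕ) + 1 := by
      have hcong : (v - d j₁).val + d j₁ ≡ 2 * j₁ + 1 + d j₁ [MOD 2 * b] := by
        rw [Nat.ModEq, ← ZMod.val_add_natCast_mod hdvd, sub_add_cancel, ← hj₁]
      rw [Nat.ModEq.add_right_cancel' _ hcong, Nat.mod_eq_of_lt (by omega)]
    refine Or.inr ⟨Nat.odd_iff.2 ?_, j₁, hw, (sub_add_cancel _ _).symm⟩
    rw [← Nat.mod_mod_of_dvd _ (dvd_mul_right 2 b), hw]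
    omega

end

theorem ncard_adj_eq_three {v : ZMod (2 * m)} {k : ℕ} (hk3 : 3 ≤ k) (hk : k ≤ 2 * m - 3)
    {z : ℤ} (hz : z = k ∨ z = -k)
    (hchord : ∀ w, IsChord m b d v w ∨ IsChord m b d w v ↔ w = v + z) :
    {w | (D3Graph m b d).Adj v w}.ncard = 3 := by
  have hne (a c : ℤ) (hac : a ≠ c) (hlt : -(2 * m : ℤ) < c - a ∧ c - a < 2 * m) :
      v + (a : ZMod (2 * m)) ≠ v + c := fun h =>
    ZMod.intCast_ne_intCast_of_abs_sub_lt hac (by rw [abs_lt]; exact_mod_cast hlt)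
      (add_left_cancel h)
  have h01 : v ≠ v + 1 := by simpa using hne 0 1 (by omega) (by omega)
  have h02 : v ≠ v - 1 := by simpa [sub_eq_add_neg] using hne 0 (-1) (by omega) (by omega)
  have h03 : v ≠ v + z := by simpa using hne 0 z (by omega) (by omega)
  have h12 : v + 1 ≠ v - 1 := by simpa [sub_eq_add_neg] using hne 1 (-1) (by omega) (by omega)
  have h13 : v + 1 ≠ v + z := by simpa using hne 1 z (by omega) (by omega)
  have h23 : v - 1 ≠ v + z := by simpa [sub_eq_add_neg] using hne (-1) z (by omega) (by omega)
  have hset : {w | (D3Graph m b d).Adj v w} = {v + 1, v - 1, v + z} := by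
    ext w
    simp only [Set.mem_ofPred_eq, Set.mem_insert_iff, Set.mem_singleton_iff, adj_iff, hchord]
    refine and_iff_right_of_imp ?_
    rintro (rfl | rfl | rfl) <;> assumption
  rw [hset, Set.ncard_eq_three]
  exact ⟨_, _, _, h12, h13, h23, rfl⟩

end D3Graph

/-- The D3 graph `G(m, b, d)` is (1) bipartite with the even-valued and odd-valued vertices
as the two colour classes, (2) contains the Hamiltonian cycle `0, 1, …, 2m-1, 0`, and
(3) is 3-regular provided `j ↦ (2*j + 1 + d j) % (2*b)` is injective. -/
theorem stmt_3 (m b : ℕ) (hm : 2 ≤ m) (hb : 1 ≤ b) (hbm : b ∣ m)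
    (d : Fin b → ℕ) (hodd : ∀ j, Odd (d j)) (h3 : ∀ j, 3 ≤ d j)
    (hle : ∀ j, d j ≤ 2 * m - 3) :
    ((D3Graph m b d).Colorable 2 ∧
      ∀ x y, (D3Graph m b d).Adj x y → (Even x.val ↔ Odd y.val)) ∧
    (∃ c : (D3Graph m b d).Walk 0 0, c.IsHamiltonianCycle ∧
      c.support = 0 :: (List.range (2 * m)).map (fun i => ((i + 1 : ℕ) : ZMod (2 * m)))) ∧
    ((Function.Injective fun j : Fin b => (2 * (j : ℕ) + 1 + d j) % (2 * b)) →
      ∀ v, {w | (D3Graph m b d).Adj v w}.ncard = 3) := by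
  have : NeZero m := ⟨by omega⟩
  refine ⟨⟨D3Graph.colorable_two hodd, fun x y => D3Graph.even_val_iff_odd_val_of_adj hodd⟩,
    SimpleGraph.exists_isHamiltonianCycle_of_adj_add_one (by omega) (D3Graph.adj_add_one hm),
    fun hinj v => ?_⟩
  rcases Nat.even_or_odd v.val with hv | hv
  · obtain ⟨j, hj⟩ := D3Graph.exists_isChord_iff_eq_sub_of_even hb hbm hodd hinj hv
    exact D3Graph.ncard_adj_eq_three (h3 j) (hle j) (Or.inr rfl)
      (by simpa [sub_eq_add_neg] using hj)
  · obtain ⟨j, hj⟩ := D3Graph.exists_isChord_iff_eq_add_of_odd hodd hb hv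
    exact D3Graph.ncard_adj_eq_three (h3 j) (hle j) (Or.inl rfl) (by simpa using hj)
end

section
/- For every even integer n ≥ 14, there exists a (3, 6) Hamiltonian bipartite graph of order n; that is, a simple graph on Fin n that is 3-regular, bipartite, contains a Hamiltonian cycle, and has girth 6. -/
/-!
Take the cycle on `ZMod n` and add the chords `{x, x + 5}` for `x` with even representative.
For even `n` each vertex lies on exactly one chord, so the graph is cubic, and the cycle itself is
a Hamiltonian cycle. Every edge changes `x` by one of the odd amounts `±1, ±5`, so the parity of the
representative is a proper 2-colouring and all cycles are even. The hexagon `0, 1, …, 5`, closed by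
the chord `{0, 5}`, gives girth at most 6. The chord step is `+5` at even and `-5` at odd vertices,
and the vertices of a 4-cycle alternate in parity; so its four steps sum to a multiple of `n` of
absolute value at most 12, hence to 0, and a finite case check then makes two opposite vertices of
the 4-cycle coincide.
-/

/-- A `(3, g)` Hamiltonian bipartite graph of order `n`: a simple graph on `Fin n` that is
3-regular (every vertex has exactly 3 neighbours), bipartite (2-colorable), contains a
Hamiltonian cycle, and has girth `g` (as the infimum in `ℕ∞` of its cycle lengths). -/
def IsHamBipartite3 (n g : ℕ) (G : SimpleGraph (Fin n)) : Prop :=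
  (∀ v, {w | G.Adj v w}.ncard = 3) ∧
  G.Colorable 2 ∧
  (∃ (v : Fin n) (c : G.Walk v v), c.IsHamiltonianCycle) ∧
  G.egirth = (g : ℕ∞)

namespace ZMod

variable {N : ℕ}

theorem even_val_iff_castHom_eq_zero [NeZero N] (hN : 2 ∣ N) (x : ZMod N) :
    Even x.val ↔ castHom hN (ZMod 2) x = 0 := by
  rw [castHom_apply, cast_eq_val, natCast_eq_zero_iff_even]

theorem even_val_add_intCast [NeZero N] (hN : Even N) (x : ZMod N) (k : ℤ) :
    Even (x + k).val ↔ (Even x.val ↔ Even k) := by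
  simp only [even_val_iff_castHom_eq_zero hN.two_dvd, map_add, map_intCast,
    ← intCast_eq_zero_iff_even]
  generalize castHom hN.two_dvd (ZMod 2) x = a
  generalize (k : ZMod 2) = b
  revert a b
  decide

theorem eq_zero_of_intCast_eq_zero {k : ℤ} (h : (k : ZMod N) = 0) (hk : |k| < N) : k = 0 :=
  Int.eq_zero_of_abs_lt_dvd ((intCast_zmod_eq_zero_iff_dvd k N).1 h) hk

end ZMod

namespace SimpleGraph

theorem Walk.IsCycle.exists_adj_of_length_eq_four {V : Type*} {G : SimpleGraph V} {u : V}
    {p : G.Walk u u} (hp : p.IsCycle) (h4 : p.length = 4) :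
    ∃ b c d, G.Adj u b ∧ G.Adj b c ∧ G.Adj c d ∧ G.Adj d u ∧ u ≠ c ∧ b ≠ d := by
  have hadj (i : ℕ) (hi : i < 4) := p.adj_getVert_succ (i := i) (by omega)
  refine ⟨p.getVert 1, p.getVert 2, p.getVert 3, ?_, hadj 1 (by norm_num), hadj 2 (by norm_num),
    ?_, fun h => ?_, fun h => ?_⟩
  · simpa using hadj 0 (by norm_num)
  · simpa [← h4] using hadj 3 (by norm_num)
  · have := hp.getVert_injOn' (by simp [h4] : 0 ∈ {i | i ≤ p.length - 1})
      (by simp [h4] : 2 ∈ {i | i ≤ p.length - 1}) (by simpa using h)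
    omega
  · have := hp.getVert_injOn (by simp [h4] : 1 ∈ {i | 1 ≤ i ∧ i ≤ p.length})
      (by simp [h4] : 3 ∈ {i | 1 ≤ i ∧ i ≤ p.length}) h
    omega

def chordedCycle (N : ℕ) : SimpleGraph (ZMod N) :=
  fromRel fun x y => y = x + 1 ∨ (Even x.val ∧ y = x + 5)

def chordStep {N : ℕ} (x : ZMod N) : ℤ := if Even x.val then 5 else -5

variable {N : ℕ}

theorem chordedCycle_adj_of_sub_eq_one [Fact (1 < N)] {u v : ZMod N} (h : u - v = 1) :
    (chordedCycle N).Adj u v :=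
  (fromRel_adj _ u v).2
    ⟨fun huv => by simp [huv] at h, Or.inr (Or.inl (eq_add_of_sub_eq' h))⟩

-- `ZMod (m + 2)` unfolds to `Fin (m + 2)`, the vertex type of `cycleGraph`.
theorem cycleGraph_le_chordedCycle (m : ℕ) :
    (cycleGraph (m + 2) : SimpleGraph (ZMod (m + 2))) ≤ chordedCycle (m + 2) := by
  have : Fact (1 < m + 2) := ⟨by omega⟩
  rintro u v (h | h)
  · exact chordedCycle_adj_of_sub_eq_one h
  · exact (chordedCycle_adj_of_sub_eq_one h).symm

theorem exists_isHamiltonianCycle_chordedCycle (m : ℕ) :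
    ∃ (v : ZMod (m + 3)) (c : (chordedCycle (m + 3)).Walk v v), c.IsHamiltonianCycle :=
  ⟨0, (cycleGraph.cycle m).mapLe (cycleGraph_le_chordedCycle (m + 1)),
    Walk.isHamiltonianCycle_iff_isCycle_and_length_eq.2 ⟨cycleGraph.isCycle_cycle.mapLe _,
      (Walk.length_mapLe _ _).trans (cycleGraph.length_cycle.trans (ZMod.card _).symm)⟩⟩

theorem chordStep_eq_five_or_eq_neg_five (x : ZMod N) : chordStep x = 5 ∨ chordStep x = -5 := by
  unfold chordStep
  split_ifs <;> simp

theorem odd_chordStep (x : ZMod N) : Odd (chordStep x) := by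
  rcases chordStep_eq_five_or_eq_neg_five x with h | h <;> rw [h] <;> decide

theorem odd_of_mem_steps {x : ZMod N} {k : ℤ} (hk : k ∈ ({1, -1, chordStep x} : Set ℤ)) :
    Odd k := by
  rcases hk with rfl | rfl | rfl
  · decide
  · decide
  · exact odd_chordStep x

theorem chordStep_natCast {n : ℕ} (hn : n < N) :
    chordStep (n : ZMod N) = if Even n then 5 else -5 := by
  rw [chordStep, ZMod.val_cast_of_lt hn]

variable [NeZero N]

theorem chordStep_add_intCast (hN : Even N) (x : ZMod N) {k : ℤ} (hk : Odd k) :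
    chordStep (x + (k : ZMod N)) = -chordStep x := by
  by_cases hx : Even x.val <;>
    simp [chordStep, ZMod.even_val_add_intCast hN, hx, Int.not_even_iff_odd.2 hk]

theorem ne_add_intCast_of_odd (hN : Even N) (x : ZMod N) {k : ℤ} (hk : Odd k) : x ≠ x + k :=
  fun h => by
    have := ZMod.even_val_add_intCast hN x k
    rw [← h] at this
    exact Int.not_even_iff_odd.2 hk (by tauto)

theorem chordedCycle_adj_iff (hN : Even N) {x y : ZMod N} :
    (chordedCycle N).Adj x y ↔ ∃ k ∈ ({1, -1, chordStep x} : Set ℤ), y = x + k := by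
  rw [chordedCycle, fromRel_adj]
  constructor
  · rintro ⟨-, (rfl | ⟨hx, rfl⟩) | (rfl | ⟨hy, rfl⟩)⟩
    · exact ⟨1, by simp, by simp⟩
    · exact ⟨5, by simp [chordStep, hx], by simp⟩
    · exact ⟨-1, by simp, by simp⟩
    · have h5 := chordStep_add_intCast hN y (k := 5) (by decide)
      rw [Int.cast_ofNat, show chordStep y = 5 from if_pos hy] at h5
      exact ⟨-5, Or.inr (Or.inr h5.symm), by simp⟩
  · rintro ⟨k, hk, rfl⟩
    refine ⟨ne_add_intCast_of_odd hN x (odd_of_mem_steps hk), ?_⟩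
    rcases hk with rfl | rfl | hk
    · simp
    · simp
    by_cases hx : Even x.val
    · rw [chordStep, if_pos hx] at hk
      subst hk
      simp [hx]
    · rw [chordStep, if_neg hx] at hk
      subst hk
      refine Or.inr (Or.inr ⟨?_, by simp⟩)
      exact (ZMod.even_val_add_intCast hN x (-5)).2 (iff_of_false hx (by decide))

theorem even_val_iff_not_of_chordedCycle_adj (hN : Even N) {x y : ZMod N}
    (h : (chordedCycle N).Adj x y) : Even y.val ↔ ¬Even x.val := by
  obtain ⟨k, hk, rfl⟩ := (chordedCycle_adj_iff hN).1 h
  rw [ZMod.even_val_add_intCast hN, iff_false_intro (Int.not_even_iff_odd.2 (odd_of_mem_steps hk))]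
  tauto

theorem chordStep_eq_neg_of_chordedCycle_adj (hN : Even N) {x y : ZMod N}
    (h : (chordedCycle N).Adj x y) : chordStep y = -chordStep x := by
  obtain ⟨k, hk, rfl⟩ := (chordedCycle_adj_iff hN).1 h
  exact chordStep_add_intCast hN x (odd_of_mem_steps hk)

def chordedCycleParityColoring (hN : Even N) : (chordedCycle N).Coloring Bool :=
  Coloring.mk (fun x => decide (Even x.val)) fun h => by
    rw [Ne, decide_eq_decide, even_val_iff_not_of_chordedCycle_adj hN h]
    tauto

theorem ncard_neighborSet_chordedCycle (hN : Even N) (h6 : 6 < N) (x : ZMod N) :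
    ((chordedCycle N).neighborSet x).ncard = 3 := by
  have hs := chordStep_eq_five_or_eq_neg_five x
  have hset : (chordedCycle N).neighborSet x = (fun k : ℤ => x + k) '' {1, -1, chordStep x} := by
    ext y
    rw [mem_neighborSet, chordedCycle_adj_iff hN, Set.mem_image]
    exact exists_congr fun k => and_congr_right' eq_comm
  rw [hset, Set.InjOn.ncard_image]
  · rcases hs with h | h <;> rw [h] <;> norm_num [Set.ncard_insert_of_notMem]
  · intro a ha b hb hab
    simp only [Set.mem_insert_iff, Set.mem_singleton_iff] at ha hb
    have hab' : ((a - b : ℤ) : ZMod N) = 0 := by push_cast; linear_combination hab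
    exact sub_eq_zero.1 (ZMod.eq_zero_of_intCast_eq_zero hab' (abs_lt.2 ⟨by omega, by omega⟩))

theorem length_ne_four_of_isCycle_chordedCycle (hN : Even N) (h12 : 12 < N) {u : ZMod N}
    {p : (chordedCycle N).Walk u u} (hp : p.IsCycle) : p.length ≠ 4 := by
  intro h4
  obtain ⟨b, c, d, hub, hbc, hcd, hdu, huc, hbd⟩ := hp.exists_adj_of_length_eq_four h4
  have hs := chordStep_eq_five_or_eq_neg_five u
  have h₁ := chordStep_eq_neg_of_chordedCycle_adj hN hub
  have h₂ := chordStep_eq_neg_of_chordedCycle_adj hN hbc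
  have h₃ := chordStep_eq_neg_of_chordedCycle_adj hN hcd
  rw [chordedCycle_adj_iff hN] at hub hbc hcd hdu
  obtain ⟨k₁, hk₁, rfl⟩ := hub
  obtain ⟨k₂, hk₂, rfl⟩ := hbc
  obtain ⟨k₃, hk₃, rfl⟩ := hcd
  obtain ⟨k₄, hk₄, hk⟩ := hdu
  simp only [Set.mem_insert_iff, Set.mem_singleton_iff] at hk₁ hk₂ hk₃ hk₄
  have hsum : k₁ + k₂ + k₃ + k₄ = 0 :=
    ZMod.eq_zero_of_intCast_eq_zero (by push_cast; linear_combination -hk)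
      (abs_lt.2 ⟨by omega, by omega⟩)
  have h₁₂ : k₁ + k₂ ≠ 0 := fun h => huc (by rw [show k₂ = -k₁ by omega]; push_cast; ring)
  have h₂₃ : k₂ + k₃ ≠ 0 := fun h => hbd (by rw [show k₃ = -k₂ by omega]; push_cast; ring)
  omega

-- The hexagon `0, 1, …, 5` of the cycle, closed by the chord `{0, 5}`.
def hexagonCopy (hN : Even N) (h6 : 6 ≤ N) : Copy (cycleGraph 6) (chordedCycle N) where
  toHom := ⟨fun i => (i.val : ZMod N), fun {u v} h => by
    have key : ∀ u v : Fin 6, (cycleGraph 6).Adj u v →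
        ∃ k ∈ ({1, -1, if Even u.val then 5 else -5} : Finset ℤ), (v.val : ℤ) = u.val + k := by
      decide
    obtain ⟨k, hk, huv⟩ := key u v h
    rw [chordedCycle_adj_iff hN, chordStep_natCast (by omega)]
    refine ⟨k, by simpa using hk, ?_⟩
    simpa using congrArg (Int.cast : ℤ → ZMod N) huv⟩
  injective' u v h := Fin.ext <| by
    simpa [ZMod.val_cast_of_lt (by omega : u.val < N), ZMod.val_cast_of_lt (by omega : v.val < N)]
      using congrArg ZMod.val h

theorem egirth_chordedCycle (hN : Even N) (h12 : 12 < N) : (chordedCycle N).egirth = 6 := by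
  refine le_antisymm ?_ (le_egirth.2 fun u p hp => ?_)
  · calc (chordedCycle N).egirth
        ≤ (cycleGraph 6).egirth := IsContained.egirth_le ⟨hexagonCopy hN (by omega)⟩
      _ ≤ (cycleGraph.cycle 3).length := egirth_le_length cycleGraph.isCycle_cycle
      _ = 6 := by simp
  · obtain ⟨k, hk⟩ := ((chordedCycleParityColoring hN).even_length_iff_congr p).2 Iff.rfl
    have h3 := hp.three_le_length
    have h4 := length_ne_four_of_isCycle_chordedCycle hN h12 hp
    exact_mod_cast (by omega : 6 ≤ p.length)

end SimpleGraph

/-- For every even integer `n ≥ 14` there exists a `(3, 6)` Hamiltonian bipartite graph of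
order `n`. -/
theorem stmt_6 (n : ℕ) (hn : 14 ≤ n) (heven : Even n) :
    ∃ G : SimpleGraph (Fin n), IsHamBipartite3 n 6 G := by
  obtain ⟨m, rfl⟩ : ∃ m, n = m + 3 := ⟨n - 3, by omega⟩
  exact ⟨SimpleGraph.chordedCycle (m + 3),
    SimpleGraph.ncard_neighborSet_chordedCycle heven (by omega),
    (SimpleGraph.chordedCycleParityColoring heven).colorable,
    SimpleGraph.exists_isHamiltonianCycle_chordedCycle m,
    by exact_mod_cast SimpleGraph.egirth_chordedCycle heven (by omega)⟩
end

section
/- For n = 10 and for n = 12, there is no (3, 6) Hamiltonian bipartite graph of order n; that is, no simple graph on Fin n is simultaneously 3-regular, bipartite, Hamiltonian, and of girth 6. -/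
open SimpleGraph Finset

lemma key {n : ℕ} (G : SimpleGraph (Fin n))
    (hdeg : ∀ v, {w | G.Adj v w}.ncard = 3)
    (C : G.Coloring (Fin 2))
    (hg : (6 : ℕ∞) ≤ G.egirth) (i : Fin 2) :
    3 * (univ.filter fun v => C v = i).card ≤
      ((univ.filter fun v => C v ≠ i).card).choose 2 := by
  classical
  have hdeg' : ∀ v, (G.neighborFinset v).card = 3 := by
    intro v
    rw [neighborFinset, ← Set.ncard_eq_toFinset_card']
    exact hdeg v
  have nc4 : ∀ u w v1 v2 : Fin n, u ≠ w → v1 ≠ v2 →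
      G.Adj v1 u → G.Adj v1 w → G.Adj v2 u → G.Adj v2 w → False := by
    intro u w v1 v2 huw hv h1 h2 h3 h4
    let c : G.Walk v1 v1 :=
      Walk.cons h1 (Walk.cons (h3.symm) (Walk.cons h4 (Walk.cons h2.symm Walk.nil)))
    have hc : c.IsCycle := by
      simp only [c, Walk.isCycle_def, Walk.isTrail_def, Walk.edges_cons, Walk.edges_nil,
        Walk.support_cons, Walk.support_nil, List.tail_cons, List.nodup_cons, List.mem_cons,
        List.not_mem_nil, List.nodup_nil, and_true, or_false, Sym2.eq_iff]
      have n1 : v1 ≠ u := G.ne_of_adj h1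
      have n2 : v1 ≠ w := G.ne_of_adj h2
      have n3 : v2 ≠ u := G.ne_of_adj h3
      have n4 : v2 ≠ w := G.ne_of_adj h4
      refine ⟨⟨?_, ?_, ?_⟩, ?_, ?_, ?_, ?_⟩ <;> aesop
    have h6 := SimpleGraph.le_egirth.mp hg v1 c hc
    simp [c] at h6
    norm_num at h6
  set A : Finset (Fin n) := univ.filter fun v => C v = i with hA
  set B : Finset (Fin n) := univ.filter fun v => C v ≠ i with hB
  -- family of 2-subsets of neighborhoods
  have hsub : A.biUnion (fun v => (G.neighborFinset v).powersetCard 2) ⊆ B.powersetCard 2 := by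
    intro p hp
    simp only [mem_biUnion] at hp
    obtain ⟨v, hv, hp⟩ := hp
    rw [mem_powersetCard] at hp ⊢
    refine ⟨?_, hp.2⟩
    intro u hu
    have hadj : G.Adj v u := by
      have := hp.1 hu
      rwa [mem_neighborFinset] at this
    have : C u ≠ C v := fun h => (C.valid hadj.symm) h
    simp only [hB, mem_filter, mem_univ, true_and]
    simp only [hA, mem_filter, mem_univ, true_and] at hv
    exact hv ▸ this
  have hdisj : (A : Set (Fin n)).PairwiseDisjoint
      (fun v => (G.neighborFinset v).powersetCard 2) := by
    intro v1 hv1 v2 hv2 hne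
    simp only [Function.onFun]
    rw [Finset.disjoint_left]
    intro p hp1 hp2
    rw [mem_powersetCard] at hp1 hp2
    obtain ⟨x, y, hxy, rfl⟩ := Finset.card_eq_two.mp hp1.2
    have a1 : G.Adj v1 x := (mem_neighborFinset ..).mp (hp1.1 (by simp))
    have a2 : G.Adj v1 y := (mem_neighborFinset ..).mp (hp1.1 (by simp))
    have a3 : G.Adj v2 x := (mem_neighborFinset ..).mp (hp2.1 (by simp))
    have a4 : G.Adj v2 y := (mem_neighborFinset ..).mp (hp2.1 (by simp))
    exact nc4 x y v1 v2 hxy hne a1 a2 a3 a4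
  have hcard := Finset.card_biUnion hdisj
  have h1 : (A.biUnion (fun v => (G.neighborFinset v).powersetCard 2)).card = 3 * A.card := by
    rw [hcard]
    rw [Finset.sum_congr rfl (fun v _ => by rw [Finset.card_powersetCard, hdeg' v])]
    simp [mul_comm]
  calc 3 * A.card = (A.biUnion (fun v => (G.neighborFinset v).powersetCard 2)).card := h1.symm
    _ ≤ (B.powersetCard 2).card := Finset.card_le_card hsub
    _ = B.card.choose 2 := Finset.card_powersetCard 2 B


lemma numeric {a b n : ℕ} (hn : n = 10 ∨ n = 12) (hab : a + b = n)
    (h1 : 3 * a ≤ b.choose 2) (h2 : 3 * b ≤ a.choose 2) : False := by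
  rw [Nat.choose_two_right] at h1 h2
  have hc : a ≤ 12 ∧ b ≤ 12 := by omega
  obtain ⟨ha, hb⟩ := hc
  interval_cases a <;> interval_cases b <;> omega

lemma no_graph {n : ℕ} (hn : n = 10 ∨ n = 12) (G : SimpleGraph (Fin n))
    (hdeg : ∀ v, {w | G.Adj v w}.ncard = 3) (hcol : G.Colorable 2)
    (hgir : G.egirth = ((6 : ℕ) : ℕ∞)) : False := by
  classical
  have C := hcol.some
  have hg : (6 : ℕ∞) ≤ G.egirth := by rw [hgir]; norm_num
  have k0 := key G hdeg C hg 0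
  have k1 := key G hdeg C hg 1
  have e1 : (univ.filter fun v => C v ≠ 0) = (univ.filter fun v => C v = 1) := by
    apply filter_congr; intro x _
    have hx := (C x).is_lt
    simp only [Ne, Fin.ext_iff, Fin.val_zero, Fin.val_one]
    omega
  have e0 : (univ.filter fun v => C v ≠ 1) = (univ.filter fun v => C v = 0) := by
    apply filter_congr; intro x _
    have hx := (C x).is_lt
    simp only [Ne, Fin.ext_iff, Fin.val_zero, Fin.val_one]
    omega
  rw [e1] at k0
  rw [e0] at k1
  have hab : (univ.filter fun v => C v = 0).card + (univ.filter fun v => C v = 1).card = n := by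
    have h := Finset.card_filter_add_card_filter_not
      (s := (univ : Finset (Fin n))) (p := fun v => C v = 0)
    rw [e1] at h
    simpa using h
  exact numeric hn hab k0 k1

/-- There is no `(3, 6)` Hamiltonian bipartite graph of order `10`, nor of order `12`. -/
theorem stmt_7 :
    (¬ ∃ G : SimpleGraph (Fin 10), IsHamBipartite3 10 6 G) ∧
    (¬ ∃ G : SimpleGraph (Fin 12), IsHamBipartite3 12 6 G) := by
  constructor
  · rintro ⟨G, hdeg, hcol, -, hgir⟩
    exact no_graph (Or.inl rfl) G hdeg hcol hgir
  · rintro ⟨G, hdeg, hcol, -, hgir⟩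
    exact no_graph (Or.inr rfl) G hdeg hcol hgir
end
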